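/- Partition Theorem: For every treelike model ⟨X,𝒪,i⟩ and every formula ψ of the bimodal language (atoms, ¬, ∧, K, □), there exists a finite intersection-closed family ℱ^ψ ⊆ 𝒫(X) containing X that is a stable partition for ψ, and such that ℱ^φ ⊆ ℱ^ψ whenever φ is a subformula of ψ. -/

import Mathlib

inductive Fml (α : Type) : Type
  | atom : α → Fml α
  | neg : Fml α → Fml α
  | and : Fml α → Fml α → Fml α
  | K : Fml α → Fml α
  | box : Fml α → Fml α

def Fml.imp {α : Type} (φ ψ : Fml α) : Fml α := (φ.and ψ.neg).neg
def Fml.or {α : Type} (φ ψ : Fml α) : Fml α := (φ.neg.and ψ.neg).neg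
def Fml.dia {α : Type} (φ : Fml α) : Fml α := φ.neg.box.neg
def Fml.L {α : Type} (φ : Fml α) : Fml α := φ.neg.K.neg

/-- Satisfaction in a subset model `⟨X, O, i⟩` at a pair `(x, U)`. -/
def Sat {X α : Type} (O : Set (Set X)) (i : α → Set X) : X → Set X → Fml α → Prop
  | x, _, .atom A => x ∈ i A
  | x, U, .neg φ => ¬ Sat O i x U φ
  | x, U, .and φ ψ => Sat O i x U φ ∧ Sat O i x U ψ
  | x, U, .K φ => ∀ y ∈ U, Sat O i y U φ
  | x, U, .box φ => ∀ V ∈ O, x ∈ V → V ⊆ U → Sat O i x V φ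

/-- A treelike space: `X ∈ O` and any two members of `O` are comparable or disjoint. -/
def Treelike {X : Type} (O : Set (Set X)) : Prop :=
  Set.univ ∈ O ∧ ∀ U ∈ O, ∀ V ∈ O, U ⊆ V ∨ V ⊆ U ∨ U ∩ V = ∅

/-- `down O U` = the members of `O` contained in `U`. -/
def down {X : Type} (O : Set (Set X)) (U : Set X) : Set (Set X) := {V ∈ O | V ⊆ U}

/-- The remainder `Rem(ℱ, U) = ↓U \ ⋃_{¬ U ⊆ W, W ∈ ℱ} ↓W`. -/
def Rem {X : Type} (O F : Set (Set X)) (U : Set X) : Set (Set X) :=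
  {V | V ∈ down O U ∧ ∀ W ∈ F, ¬ U ⊆ W → ¬ V ⊆ W}

/-- Closure under binary intersections. -/
def InterClosed {X : Type} (F : Set (Set X)) : Prop := ∀ U ∈ F, ∀ V ∈ F, U ∩ V ∈ F

/-- `G` is stable for `φ`: for each point `x`, the truth value of `φ` at `(x,V)`
is the same for all `V ∈ G` containing `x`. -/
def Stable {X α : Type} (O : Set (Set X)) (i : α → Set X) (G : Set (Set X)) (φ : Fml α) : Prop :=
  ∀ x : X, (∀ V ∈ G, x ∈ V → Sat O i x V φ) ∨ (∀ V ∈ G, x ∈ V → ¬ Sat O i x V φ)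

/-- Subformula relation. -/
inductive Subf {α : Type} : Fml α → Fml α → Prop
  | refl (φ : Fml α) : Subf φ φ
  | neg {φ ψ : Fml α} : Subf φ ψ → Subf φ ψ.neg
  | andL {φ ψ χ : Fml α} : Subf φ ψ → Subf φ (ψ.and χ)
  | andR {φ ψ χ : Fml α} : Subf φ χ → Subf φ (ψ.and χ)
  | K {φ ψ : Fml α} : Subf φ ψ → Subf φ ψ.K
  | box {φ ψ : Fml α} : Subf φ ψ → Subf φ ψ.box

/-!
The families are built by recursion on the formula. Atoms need only `{X}`; `¬` and `□` reuse
the family of their argument; `φ ∧ χ` takes the intersection closure of both families; and `Kφ`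
adds to `ℱ^φ`, for each `U ∈ ℱ^φ`, the union of those members of `Rem(ℱ^φ, U)` on which `Kφ`
holds. Once one member of `Rem(ℱ^{Kφ}, U)` satisfies `Kφ`, it lies in that union, so by the
definition of the remainder all of `U` does, and stability of `φ` then gives `Kφ` on every other
member. For `□`, two opens around a point are comparable in a treelike space and remainders are
convex, so a witness of `¬φ` below one member of `Rem` is either below the other member too, or
itself a member of `Rem`.

Stability is proved for the remainder at every set `U`, not only at `U ∈ ℱ`: this costs nothing,
because `Rem(ℱ, U) ⊆ Rem(ℱ, Û)` for the least `Û ∈ ℱ` containing `U`.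
-/

open Set FiniteInter

variable {X α : Type} {O : Set (Set X)} {i : α → Set X}

theorem Treelike.subset_or_subset_of_mem (hT : Treelike O) {U V : Set X} (hU : U ∈ O)
    (hV : V ∈ O) {x : X} (hxU : x ∈ U) (hxV : x ∈ V) : U ⊆ V ∨ V ⊆ U :=
  (hT.2 U hU V hV).imp_right fun h => h.resolve_right (nonempty_iff_ne_empty.1 ⟨x, hxU, hxV⟩)

theorem Set.Finite.finiteInterClosure {S : Set (Set X)} (hS : S.Finite) :
    (finiteInterClosure S).Finite := by
  refine ((hS.finite_subsets).image (⋂₀ ·)).subset ?_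
  intro U hU
  induction hU with
  | basic h => exact ⟨{_}, singleton_subset_iff.2 h, sInter_singleton _⟩
  | univ => exact ⟨∅, empty_subset _, sInter_empty⟩
  | inter _ _ ihU ihV =>
    obtain ⟨G, hG, rfl⟩ := ihU
    obtain ⟨H, hH, rfl⟩ := ihV
    exact ⟨G ∪ H, union_subset hG hH, sInter_union G H⟩

def hullIn (F : Set (Set X)) (U : Set X) : Set X := ⋂₀ {W ∈ F | U ⊆ W}

theorem subset_hullIn (F : Set (Set X)) (U : Set X) : U ⊆ hullIn F U :=
  subset_sInter fun _ hW => hW.2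

theorem hullIn_subset {F : Set (Set X)} {U W : Set X} (hW : W ∈ F) (hUW : U ⊆ W) :
    hullIn F U ⊆ W :=
  sInter_subset_of_mem ⟨hW, hUW⟩

theorem hullIn_mem {F : Set (Set X)} (hF : F.Finite) (hFI : FiniteInter F) (U : Set X) :
    hullIn F U ∈ F := by
  have hfin : {W ∈ F | U ⊆ W}.Finite := hF.subset (sep_subset _ _)
  have hmem := hFI.finiteInter_mem hfin.toFinset (by rw [hfin.coe_toFinset]; exact sep_subset _ _)
  rwa [hfin.coe_toFinset] at hmem

section Rem

variable {F F' : Set (Set X)} {U V W : Set X}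

theorem rem_anti (h : F ⊆ F') : Rem O F' U ⊆ Rem O F U :=
  fun _ hV => ⟨hV.1, fun W hW => hV.2 W (h hW)⟩

theorem subset_of_mem_rem (hV : V ∈ Rem O F U) (hW : W ∈ F) (hVW : V ⊆ W) : U ⊆ W :=
  not_not.1 fun hUW => hV.2 W hW hUW hVW

theorem rem_subset_rem_hullIn : Rem O F U ⊆ Rem O F (hullIn F U) :=
  fun _ hV => ⟨⟨hV.1.1, hV.1.2.trans (subset_hullIn F U)⟩,
    fun _ hW hW' hVW => hW' (hullIn_subset hW (subset_of_mem_rem hV hW hVW))⟩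

theorem mem_rem_of_subset_of_subset {V₁ V₂ : Set X} (h₁ : V₁ ∈ Rem O F U) (h₂ : V₂ ∈ Rem O F U)
    (hV : V ∈ O) (h₁V : V₁ ⊆ V) (hV₂ : V ⊆ V₂) : V ∈ Rem O F U :=
  ⟨⟨hV, hV₂.trans h₂.1.2⟩, fun W hW hUW hVW => h₁.2 W hW hUW (h₁V.trans hVW)⟩

end Rem

section Stable

variable {G R : Set (Set X)} {φ χ : Fml α}

theorem Stable.sat_iff (h : Stable O i G φ) {x : X} {V₁ V₂ : Set X} (h₁ : V₁ ∈ G) (hx₁ : x ∈ V₁)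
    (h₂ : V₂ ∈ G) (hx₂ : x ∈ V₂) : Sat O i x V₁ φ ↔ Sat O i x V₂ φ := by
  rcases h x with h | h
  · exact iff_of_true (h V₁ h₁ hx₁) (h V₂ h₂ hx₂)
  · exact iff_of_false (h V₁ h₁ hx₁) (h V₂ h₂ hx₂)

theorem stable_of_sat_imp
    (h : ∀ x, ∀ V₁ ∈ G, x ∈ V₁ → Sat O i x V₁ φ → ∀ V₂ ∈ G, x ∈ V₂ → Sat O i x V₂ φ) :
    Stable O i G φ := by
  intro x
  by_cases hx : ∃ V₁ ∈ G, x ∈ V₁ ∧ Sat O i x V₁ φ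
  · obtain ⟨V₁, h₁, hx₁, hsat⟩ := hx
    exact Or.inl fun V₂ h₂ hx₂ => h x V₁ h₁ hx₁ hsat V₂ h₂ hx₂
  · exact Or.inr fun V hV hxV hsat => hx ⟨V, hV, hxV, hsat⟩

theorem Stable.mono (h : Stable O i G φ) (hRG : R ⊆ G) : Stable O i R φ :=
  fun x => (h x).imp (fun h V hV => h V (hRG hV)) (fun h V hV => h V (hRG hV))

theorem stable_atom (A : α) : Stable O i G (.atom A) :=
  stable_of_sat_imp fun _ _ _ _ h _ _ _ => h

theorem Stable.neg (h : Stable O i G φ) : Stable O i G φ.neg :=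
  stable_of_sat_imp fun _ _ h₁ hx₁ hn _ h₂ hx₂ => mt (h.sat_iff h₁ hx₁ h₂ hx₂).2 hn

theorem Stable.and (hφ : Stable O i G φ) (hχ : Stable O i G χ) : Stable O i G (φ.and χ) :=
  stable_of_sat_imp fun _ _ h₁ hx₁ hsat _ h₂ hx₂ =>
    ⟨(hφ.sat_iff h₁ hx₁ h₂ hx₂).1 hsat.1, (hχ.sat_iff h₁ hx₁ h₂ hx₂).1 hsat.2⟩

theorem Stable.K (hR : Stable O i R φ) (hGR : G ⊆ R)
    (hcover : ∀ V₁ ∈ G, (∀ y ∈ V₁, Sat O i y V₁ φ) →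
      ∀ V₂ ∈ G, V₂ ⊆ ⋃₀ {V ∈ R | ∀ y ∈ V, Sat O i y V φ}) :
    Stable O i G φ.K := by
  refine stable_of_sat_imp fun _ V₁ h₁ _ hK V₂ h₂ _ y hy => ?_
  obtain ⟨V, ⟨hVR, hKV⟩, hyV⟩ := hcover V₁ h₁ hK V₂ h₂ hy
  exact (hR.sat_iff hVR hyV (hGR h₂) hy).1 (hKV y hyV)

theorem Stable.box (hT : Treelike O) (hR : Stable O i R φ) (hRO : R ⊆ O)
    (hconvex : ∀ V₁ ∈ R, ∀ V₂ ∈ R, ∀ V ∈ O, V₁ ⊆ V → V ⊆ V₂ → V ∈ R) :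
    Stable O i R φ.box := by
  refine stable_of_sat_imp fun x V₁ h₁ hx₁ hbox V₂ h₂ _ V hV hxV hVV₂ => ?_
  rcases hT.subset_or_subset_of_mem hV (hRO h₁) hxV hx₁ with hVV₁ | hV₁V
  · exact hbox V hV hxV hVV₁
  · have hVR : V ∈ R := hconvex V₁ h₁ V₂ h₂ V hV hV₁V hVV₂
    exact (hR.sat_iff h₁ hx₁ hVR hxV).1 (hbox V₁ (hRO h₁) hx₁ subset_rfl)

end Stable

def kRegion (O : Set (Set X)) (i : α → Set X) (φ : Fml α) (F : Set (Set X)) (U : Set X) :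
    Set X :=
  ⋃₀ {V ∈ Rem O F U | ∀ y ∈ V, Sat O i y V φ}

theorem stable_rem_K {φ : Fml α} {F F' : Set (Set X)} (hF : F.Finite) (hFI : FiniteInter F)
    (hφ : ∀ U, Stable O i (Rem O F U) φ) (hFF' : F ⊆ F') (hkF' : kRegion O i φ F '' F ⊆ F')
    (U : Set X) : Stable O i (Rem O F' U) φ.K := by
  have hsub : Rem O F' U ⊆ Rem O F (hullIn F U) := (rem_anti hFF').trans rem_subset_rem_hullIn
  refine (hφ (hullIn F U)).K hsub fun V₁ h₁ hK V₂ h₂ => ?_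
  have hkmem : kRegion O i φ F (hullIn F U) ∈ F' := hkF' ⟨_, hullIn_mem hF hFI U, rfl⟩
  have hU : U ⊆ kRegion O i φ F (hullIn F U) :=
    subset_of_mem_rem h₁ hkmem (subset_sUnion_of_mem ⟨hsub h₁, hK⟩)
  exact h₂.1.2.trans hU

variable (O i) in
def partitionFamily : Fml α → Set (Set X)
  | .atom _ => {univ}
  | .neg φ => partitionFamily φ
  | .and φ χ => finiteInterClosure (partitionFamily φ ∪ partitionFamily χ)
  | .K φ => finiteInterClosure
      (partitionFamily φ ∪ kRegion O i φ (partitionFamily φ) '' partitionFamily φ)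
  | .box φ => partitionFamily φ

theorem partitionFamily_mono {φ ψ : Fml α} (h : Subf φ ψ) :
    partitionFamily O i φ ⊆ partitionFamily O i ψ := by
  induction h with
  | refl => exact subset_rfl
  | neg _ ih | box _ ih => exact ih
  | andL _ ih | K _ ih => exact ih.trans fun _ hU => .basic (.inl hU)
  | andR _ ih => exact ih.trans fun _ hU => .basic (.inr hU)

theorem partitionFamily_spec (hT : Treelike O) (ψ : Fml α) :
    (partitionFamily O i ψ).Finite ∧ FiniteInter (partitionFamily O i ψ) ∧
      ∀ U, Stable O i (Rem O (partitionFamily O i ψ) U) ψ := by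
  induction ψ with
  | atom A =>
    exact ⟨finite_singleton _, ⟨rfl, by rintro _ rfl _ rfl; exact inter_self _⟩, fun _ => stable_atom A⟩
  | neg φ ih =>
    exact ⟨ih.1, ih.2.1, fun U => (ih.2.2 U).neg⟩
  | and φ χ ihφ ihχ =>
    refine ⟨(ihφ.1.union ihχ.1).finiteInterClosure, finiteInterClosure_finiteInter _,
      fun U => ?_⟩
    exact ((ihφ.2.2 U).mono (rem_anti fun _ hV => .basic (.inl hV))).and
      ((ihχ.2.2 U).mono (rem_anti fun _ hV => .basic (.inr hV)))
  | K φ ih =>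
    obtain ⟨hF, hFI, hφ⟩ := ih
    exact ⟨(hF.union (hF.image _)).finiteInterClosure, finiteInterClosure_finiteInter _,
      stable_rem_K hF hFI hφ (fun _ hV => .basic (.inl hV)) (fun _ hV => .basic (.inr hV))⟩
  | box φ ih =>
    obtain ⟨hF, hFI, hφ⟩ := ih
    exact ⟨hF, hFI, fun U => (hφ U).box hT (fun _ hV => hV.1.1)
      fun _ h₁ _ h₂ _ => mem_rem_of_subset_of_subset h₁ h₂⟩

/-- Partition Theorem: every treelike model admits a family of finite stable
partitions, one for each formula, monotone along the subformula relation. -/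
theorem partition_theorem {X α : Type} (O : Set (Set X)) (i : α → Set X)
    (hT : Treelike O) :
    ∃ F : Fml α → Set (Set X),
      ∀ ψ : Fml α,
        (F ψ).Finite ∧ Set.univ ∈ F ψ ∧ InterClosed (F ψ) ∧
          (∀ U ∈ F ψ, Stable O i (Rem O (F ψ) U) ψ) ∧
          ∀ φ : Fml α, Subf φ ψ → F φ ⊆ F ψ := by
  refine ⟨partitionFamily O i, fun ψ => ?_⟩
  obtain ⟨hfin, hFI, hstable⟩ := partitionFamily_spec hT ψ
  exact ⟨hfin, hFI.univ_mem, fun _ hU _ hV => hFI.inter_mem hU hV, fun U _ => hstable U,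
    fun _ h => partitionFamily_mono h⟩
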